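/- arXiv:1610.01045 — 3 statements merged into one kernel-verified Lean document; each statement's English description precedes it below -/
import Mathlib

section
/- Let $\Sigma_{xx}, \Sigma_{yy}, \widetilde{\Sigma}_{xx}, \widetilde{\Sigma}_{yy}$ and $\widetilde{\Sigma}_{xy}$ be real $n\times n$ matrices such that the block matrix $\begin{bmatrix}\widetilde{\Sigma}_{xx} & \widetilde{\Sigma}_{xy}\\ \widetilde{\Sigma}_{xy}^T & \widetilde{\Sigma}_{yy}\end{bmatrix}$ is positive semidefinite, $\Sigma_{xx} \succeq \widetilde{\Sigma}_{xx}$ and $\Sigma_{yy} \succeq \widetilde{\Sigma}_{yy}$. Let $K^\star$ and $\Sigma_{xy}^\star$ be $n\times n$ matrices such that $\begin{bmatrix}\Sigma_{xx} & \Sigma_{xy}^\star\\ \Sigma_{xy}^{\star T} & \Sigma_{yy}\end{bmatrix} \succeq 0$ and such that $\Sigma_{xy}^\star$ maximizes $\operatorname{trace}\big((I-K^\star)\Sigma_{xx}(I-K^\star)^T + (I-K^\star)\Sigma_{xy}K^{\star T} + K^\star \Sigma_{xy}^T(I-K^\star)^T + K^\star \Sigma_{yy}K^{\star T}\big)$ over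 all $n\times n$ matrices $\Sigma_{xy}$ satisfying $\begin{bmatrix}\Sigma_{xx} & \Sigma_{xy}\\ \Sigma_{xy}^T & \Sigma_{yy}\end{bmatrix} \succeq 0$. Define $\Sigma_{zz}^\star = (I-K^\star)\Sigma_{xx}(I-K^\star)^T + (I-K^\star)\Sigma_{xy}^\star K^{\star T} + K^\star \Sigma_{xy}^{\star T}(I-K^\star)^T + K^\star \Sigma_{yy}K^{\star T}$ and $\widetilde{\Sigma}_{zz} = (I-K^\star)\widetilde{\Sigma}_{xx}(I-K^\star)^T + (I-K^\star)\widetilde{\Sigma}_{xy} K^{\star T} + K^\star \widetilde{\Sigma}_{xy}^{T}(I-K^\star)^T + K^\star \widetilde{\Sigma}_{yy}K^{\star T}$. Then $\operatorname{trace}(\Sigma_{zz}^\star) \geq \operatorname{trace}(\widetilde{\Sigma}_{zz})$. -/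
/-!
The true cross-covariance `Stxy` is admissible for the bounds `Sxx, Syy`: adding the positive
semidefinite block matrix `diag(Sxx - Stxx, Syy - Styy)` to the true joint covariance keeps it
positive semidefinite. Replacing the true diagonal blocks by their bounds adds
`(1 - K) (Sxx - Stxx) (1 - K)ᵀ + K (Syy - Styy) Kᵀ ⪰ 0` to the fused covariance, so the true
fused trace is at most the trace at `(Sxx, Stxy, Syy)`, which the maximizer dominates.
-/

open Matrix

section

variable {m n : Type*} [Fintype m] [Fintype n]

theorem Matrix.PosSemidef.fromBlocks_zero {A : Matrix m m ℝ} {B : Matrix n n ℝ}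
    (hA : A.PosSemidef) (hB : B.PosSemidef) : (fromBlocks A 0 0 B).PosSemidef := by
  rw [posSemidef_iff_dotProduct_mulVec]
  refine ⟨isHermitian_fromBlocks_iff.2 ⟨hA.1, by simp, by simp, hB.1⟩, fun x => ?_⟩
  have hx₁ := hA.dotProduct_mulVec_nonneg (x ∘ Sum.inl)
  have hx₂ := hB.dotProduct_mulVec_nonneg (x ∘ Sum.inr)
  simp only [star_trivial, fromBlocks_mulVec, Matrix.zero_mulVec, add_zero, zero_add,
    dotProduct, Fintype.sum_sum_type, Sum.elim_inl, Sum.elim_inr] at hx₁ hx₂ ⊢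
  exact add_nonneg hx₁ hx₂

theorem Matrix.PosSemidef.fromBlocks_of_sub {A A' : Matrix m m ℝ} {B : Matrix m n ℝ}
    {D D' : Matrix n n ℝ}
    (h : (fromBlocks A' B Bᵀ D').PosSemidef) (hA : (A - A').PosSemidef)
    (hD : (D - D').PosSemidef) : (fromBlocks A B Bᵀ D).PosSemidef := by
  have := h.add (hA.fromBlocks_zero hD)
  rwa [fromBlocks_add, add_zero, add_zero, add_sub_cancel, add_sub_cancel] at this

/-- The covariance of `(1 - K) x + K y` when `x, y` have covariances `Sxx, Syy` and
cross-covariance `Sxy`. -/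
noncomputable def fusedCov [DecidableEq n] (K Sxx Sxy Syy : Matrix n n ℝ) : Matrix n n ℝ :=
  (1 - K) * Sxx * (1 - K)ᵀ + (1 - K) * Sxy * Kᵀ + K * Sxyᵀ * (1 - K)ᵀ + K * Syy * Kᵀ

theorem fusedCov_sub_fusedCov [DecidableEq n] (K Sxx Sxx' Sxy Syy Syy' : Matrix n n ℝ) :
    fusedCov K Sxx Sxy Syy - fusedCov K Sxx' Sxy Syy' =
      (1 - K) * (Sxx - Sxx') * (1 - K)ᵀ + K * (Syy - Syy') * Kᵀ := by
  simp only [fusedCov, Matrix.mul_sub, Matrix.sub_mul]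
  abel

theorem trace_fusedCov_le_of_sub [DecidableEq n] {K Sxx Sxx' Sxy Syy Syy' : Matrix n n ℝ}
    (hx : (Sxx - Sxx').PosSemidef) (hy : (Syy - Syy').PosSemidef) :
    (fusedCov K Sxx' Sxy Syy').trace ≤ (fusedCov K Sxx Sxy Syy).trace := by
  have hdiff : (fusedCov K Sxx Sxy Syy - fusedCov K Sxx' Sxy Syy').PosSemidef := by
    rw [fusedCov_sub_fusedCov, ← conjTranspose_eq_transpose_of_trivial]
    exact (hx.mul_mul_conjTranspose_same _).add (hy.mul_mul_conjTranspose_same _)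
  simpa [trace_sub] using hdiff.trace_nonneg

end

theorem robust_fusion_trace_consistent_general {n : ℕ}
    (Sxx Syy Stxx Styy Stxy Kstar Sxystar : Matrix (Fin n) (Fin n) ℝ)
    (h_joint : (fromBlocks Stxx Stxy Stxyᵀ Styy).PosSemidef)
    (hx : (Sxx - Stxx).PosSemidef)
    (hy : (Syy - Styy).PosSemidef)
    (h_max : ∀ Sxy : Matrix (Fin n) (Fin n) ℝ,
      (fromBlocks Sxx Sxy Sxyᵀ Syy).PosSemidef →
      ((1 - Kstar) * Sxx * (1 - Kstar)ᵀ + (1 - Kstar) * Sxy * Kstarᵀ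
        + Kstar * Sxyᵀ * (1 - Kstar)ᵀ + Kstar * Syy * Kstarᵀ).trace ≤
      ((1 - Kstar) * Sxx * (1 - Kstar)ᵀ + (1 - Kstar) * Sxystar * Kstarᵀ
        + Kstar * Sxystarᵀ * (1 - Kstar)ᵀ + Kstar * Syy * Kstarᵀ).trace) :
    ((1 - Kstar) * Stxx * (1 - Kstar)ᵀ + (1 - Kstar) * Stxy * Kstarᵀ
      + Kstar * Stxyᵀ * (1 - Kstar)ᵀ + Kstar * Styy * Kstarᵀ).trace ≤
    ((1 - Kstar) * Sxx * (1 - Kstar)ᵀ + (1 - Kstar) * Sxystar * Kstarᵀ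
      + Kstar * Sxystarᵀ * (1 - Kstar)ᵀ + Kstar * Syy * Kstarᵀ).trace := by
  have h_admissible : (fromBlocks Sxx Stxy Stxyᵀ Syy).PosSemidef :=
    h_joint.fromBlocks_of_sub hx hy
  change (fusedCov Kstar Stxx Stxy Styy).trace ≤ (fusedCov Kstar Sxx Sxystar Syy).trace
  calc (fusedCov Kstar Stxx Stxy Styy).trace
      ≤ (fusedCov Kstar Sxx Stxy Syy).trace := trace_fusedCov_le_of_sub hx hy
    _ ≤ (fusedCov Kstar Sxx Sxystar Syy).trace := h_max Stxy h_admissible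

/-- Lemma 1 (trace-consistency of Robust Fusion): if `(x̃, Sxx)` and `(ỹ, Syy)` are
consistent and `(Kstar, Sxystar)` is such that `Sxystar` maximizes the trace of the fused
covariance over all admissible cross-covariances, then the reported trace upper-bounds
the true fused error covariance trace. -/
theorem robust_fusion_trace_consistent {n : ℕ}
    (Sxx Syy Stxx Styy Stxy Kstar Sxystar : Matrix (Fin n) (Fin n) ℝ)
    (h_joint : (fromBlocks Stxx Stxy Stxyᵀ Styy).PosSemidef)
    (hx : (Sxx - Stxx).PosSemidef)
    (hy : (Syy - Styy).PosSemidef)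
    (h_feas : (fromBlocks Sxx Sxystar Sxystarᵀ Syy).PosSemidef)
    (h_max : ∀ Sxy : Matrix (Fin n) (Fin n) ℝ,
      (fromBlocks Sxx Sxy Sxyᵀ Syy).PosSemidef →
      ((1 - Kstar) * Sxx * (1 - Kstar)ᵀ + (1 - Kstar) * Sxy * Kstarᵀ
        + Kstar * Sxyᵀ * (1 - Kstar)ᵀ + Kstar * Syy * Kstarᵀ).trace ≤
      ((1 - Kstar) * Sxx * (1 - Kstar)ᵀ + (1 - Kstar) * Sxystar * Kstarᵀ
        + Kstar * Sxystarᵀ * (1 - Kstar)ᵀ + Kstar * Syy * Kstarᵀ).trace) :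
    ((1 - Kstar) * Stxx * (1 - Kstar)ᵀ + (1 - Kstar) * Stxy * Kstarᵀ
      + Kstar * Stxyᵀ * (1 - Kstar)ᵀ + Kstar * Styy * Kstarᵀ).trace ≤
    ((1 - Kstar) * Sxx * (1 - Kstar)ᵀ + (1 - Kstar) * Sxystar * Kstarᵀ
      + Kstar * Sxystarᵀ * (1 - Kstar)ᵀ + Kstar * Syy * Kstarᵀ).trace :=
  robust_fusion_trace_consistent_general Sxx Syy Stxx Styy Stxy Kstar Sxystar h_joint hx hy h_max
end

section
/- Let $C$ be a real $p\times n$ matrix, $D$ a real $p\times m$ matrix, $\Sigma_\eta$ a positive semidefinite $p\times p$ matrix, and let $\Sigma_{xx}, \widetilde{\Sigma}_{xx}$ ($n\times n$), $\Sigma_{yy}, \widetilde{\Sigma}_{yy}$ ($m\times m$), $\widetilde{\Sigma}_{xy}$ ($n\times m$) be real matrices such that $\begin{bmatrix}\widetilde{\Sigma}_{xx} & \widetilde{\Sigma}_{xy}\\ \widetilde{\Sigma}_{xy}^T & \widetilde{\Sigma}_{yy}\end{bmatrix} \succeq 0$, $\Sigma_{xx} \succeq \widetilde{\Sigma}_{xx}$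 and $\Sigma_{yy} \succeq \widetilde{\Sigma}_{yy}$. For an $n\times p$ matrix $K$ and an $n\times m$ matrix $Q$, define $\Sigma^+(K,Q) = (I-KC)\Sigma_{xx}(I-KC)^T - (I-KC)Q D^T K^T - KD Q^T (I-KC)^T + KD\Sigma_{yy}D^TK^T + K\Sigma_\eta K^T$. Let $K^\star$ and $\Sigma_{xy}^\star$ be such that $\begin{bmatrix}\Sigma_{xx} & \Sigma_{xy}^\star\\ \Sigma_{xy}^{\star T} & \Sigma_{yy}\end{bmatrix} \succeq 0$ and $\Sigma_{xy}^\star$ maximizes $\operatorname{trace}(\Sigma^+(K^\star, Q))$ over all $n\times m$ matrices $Q$ satisfying $\begin{bmatrix}\Sigma_{xx} & Q\\ Q^T & \Sigma_{yy}\end{bmatrix} \succeq 0$. Define $\widetilde{\Sigma}^+ = (I-K^\star C)\widetilde{\Sigma}_{xx}(I-K^\star C)^T - (I-K^\star C)\widetilde{\Sigma}_{xy} D^T K^{\star T} - K^\star D \widetilde{\Sigma}_{xy}^T (I-K^\star C)^T + K^\star D\widetilde{\Sigma}_{yy}D^TK^{\star T} + K^\star\Sigma_\eta K^{\star T}$.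 Then $\operatorname{trace}(\Sigma^+(K^\star, \Sigma_{xy}^\star)) \geq \operatorname{trace}(\widetilde{\Sigma}^+)$. -/
/-!
Since the bounds dominate the true covariances, adding the positive semidefinite block
`diag(Sxx - Stxx, Syy - Styy)` to the true joint covariance shows that `Stxy` is a feasible
cross-covariance, so by maximality `trace Σ⁺(K⋆, Stxy) ≤ trace Σ⁺(K⋆, Σ⋆xy)`. For a fixed
cross-covariance, `Σ⁺` is monotone in the diagonal blocks: replacing the true covariances by
their bounds adds `(I - K⋆C)(Sxx - Stxx)(I - K⋆C)ᵀ + (K⋆D)(Syy - Styy)(K⋆D)ᵀ`, which is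
positive semidefinite and hence has nonnegative trace.
-/

open Matrix

namespace Matrix

variable {ι κ ο R : Type*} [Fintype ι] [Fintype κ] [Fintype ο]
  [Ring R] [PartialOrder R] [StarRing R] [AddLeftMono R]

theorem PosSemidef.fromBlocks_zero_s1 {P : Matrix ι ι R} {Q : Matrix κ κ R}
    (hP : P.PosSemidef) (hQ : Q.PosSemidef) : (fromBlocks P 0 0 Q).PosSemidef := by
  refine .of_dotProduct_mulVec_nonneg ?_ fun x => ?_
  · simp [IsHermitian, fromBlocks_conjTranspose, hP.isHermitian.eq, hQ.isHermitian.eq]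
  · have hsplit : star x ⬝ᵥ (fromBlocks P 0 0 Q *ᵥ x) =
        star (x ∘ Sum.inl) ⬝ᵥ (P *ᵥ (x ∘ Sum.inl)) +
          star (x ∘ Sum.inr) ⬝ᵥ (Q *ᵥ (x ∘ Sum.inr)) := by
      simp [dotProduct, Fintype.sum_sum_type, fromBlocks, mulVec, Function.comp_def]
    rw [hsplit]
    exact add_nonneg (hP.dotProduct_mulVec_nonneg _) (hQ.dotProduct_mulVec_nonneg _)

theorem PosSemidef.fromBlocks_of_sub_s1 {A A' : Matrix ι ι R} {B : Matrix ι κ R}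
    {D D' : Matrix κ κ R} (h : (fromBlocks A B Bᴴ D).PosSemidef)
    (hA : (A' - A).PosSemidef) (hD : (D' - D).PosSemidef) :
    (fromBlocks A' B Bᴴ D').PosSemidef := by
  have hsum : fromBlocks A' B Bᴴ D' = fromBlocks A B Bᴴ D + fromBlocks (A' - A) 0 0 (D' - D) := by
    simp [fromBlocks_add]
  rw [hsum]
  exact h.add (hA.fromBlocks_zero_s1 hD)

theorem trace_le_trace_of_posSemidef_sub {A B : Matrix ι ι R} (h : (B - A).PosSemidef) :
    A.trace ≤ B.trace := by
  simpa [trace_sub] using h.trace_nonneg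

variable [DecidableEq ι]

/-- The paper's `Σ⁺(K, Sxy)`. -/
def posteriorCov (C : Matrix ο ι R) (D : Matrix ο κ R) (Se : Matrix ο ο R) (K : Matrix ι ο R)
    (Sxx : Matrix ι ι R) (Sxy : Matrix ι κ R) (Syy : Matrix κ κ R) : Matrix ι ι R :=
  (1 - K * C) * Sxx * (1 - K * C)ᴴ - (1 - K * C) * Sxy * Dᴴ * Kᴴ
    - K * D * Sxyᴴ * (1 - K * C)ᴴ + K * D * Syy * Dᴴ * Kᴴ + K * Se * Kᴴ

theorem PosSemidef.posteriorCov_sub_posteriorCov (C : Matrix ο ι R) (D : Matrix ο κ R)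
    (Se : Matrix ο ο R) (K : Matrix ι ο R) (Sxy : Matrix ι κ R)
    {Sxx Sxx' : Matrix ι ι R} {Syy Syy' : Matrix κ κ R}
    (hx : (Sxx' - Sxx).PosSemidef) (hy : (Syy' - Syy).PosSemidef) :
    (posteriorCov C D Se K Sxx' Sxy Syy' - posteriorCov C D Se K Sxx Sxy Syy).PosSemidef := by
  have hdiff : posteriorCov C D Se K Sxx' Sxy Syy' - posteriorCov C D Se K Sxx Sxy Syy =
      (1 - K * C) * (Sxx' - Sxx) * (1 - K * C)ᴴ + (K * D) * (Syy' - Syy) * (K * D)ᴴ := by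
    simp only [posteriorCov, Matrix.mul_sub, Matrix.sub_mul, conjTranspose_mul, Matrix.mul_assoc]
    abel
  rw [hdiff]
  exact (hx.mul_mul_conjTranspose_same _).add (hy.mul_mul_conjTranspose_same _)

end Matrix

theorem robust_linear_update_trace_consistent_general {n m p : ℕ}
    (C : Matrix (Fin p) (Fin n) ℝ) (D : Matrix (Fin p) (Fin m) ℝ)
    (Se : Matrix (Fin p) (Fin p) ℝ)
    (Sxx Stxx : Matrix (Fin n) (Fin n) ℝ)
    (Syy Styy : Matrix (Fin m) (Fin m) ℝ)
    (Stxy : Matrix (Fin n) (Fin m) ℝ)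
    (Kstar : Matrix (Fin n) (Fin p) ℝ) (Sxystar : Matrix (Fin n) (Fin m) ℝ)
    (h_joint : (fromBlocks Stxx Stxy Stxyᵀ Styy).PosSemidef)
    (hx : (Sxx - Stxx).PosSemidef)
    (hy : (Syy - Styy).PosSemidef)
    (h_max : ∀ Q : Matrix (Fin n) (Fin m) ℝ,
      (fromBlocks Sxx Q Qᵀ Syy).PosSemidef →
      ((1 - Kstar * C) * Sxx * (1 - Kstar * C)ᵀ - (1 - Kstar * C) * Q * Dᵀ * Kstarᵀ
        - Kstar * D * Qᵀ * (1 - Kstar * C)ᵀ + Kstar * D * Syy * Dᵀ * Kstarᵀ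
        + Kstar * Se * Kstarᵀ).trace ≤
      ((1 - Kstar * C) * Sxx * (1 - Kstar * C)ᵀ - (1 - Kstar * C) * Sxystar * Dᵀ * Kstarᵀ
        - Kstar * D * Sxystarᵀ * (1 - Kstar * C)ᵀ + Kstar * D * Syy * Dᵀ * Kstarᵀ
        + Kstar * Se * Kstarᵀ).trace) :
    ((1 - Kstar * C) * Stxx * (1 - Kstar * C)ᵀ - (1 - Kstar * C) * Stxy * Dᵀ * Kstarᵀ
      - Kstar * D * Stxyᵀ * (1 - Kstar * C)ᵀ + Kstar * D * Styy * Dᵀ * Kstarᵀ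
      + Kstar * Se * Kstarᵀ).trace ≤
    ((1 - Kstar * C) * Sxx * (1 - Kstar * C)ᵀ - (1 - Kstar * C) * Sxystar * Dᵀ * Kstarᵀ
      - Kstar * D * Sxystarᵀ * (1 - Kstar * C)ᵀ + Kstar * D * Syy * Dᵀ * Kstarᵀ
      + Kstar * Se * Kstarᵀ).trace := by
  -- Over `ℝ`, `ᴴ` and `ᵀ` agree definitionally, so both sides are `posteriorCov` traces.
  have h_feasible : (fromBlocks Sxx Stxy Stxyᵀ Syy).PosSemidef := h_joint.fromBlocks_of_sub_s1 hx hy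
  have h_mono : (posteriorCov C D Se Kstar Stxx Stxy Styy).trace ≤
      (posteriorCov C D Se Kstar Sxx Stxy Syy).trace :=
    trace_le_trace_of_posSemidef_sub (.posteriorCov_sub_posteriorCov C D Se Kstar Stxy hx hy)
  exact h_mono.trans (h_max Stxy h_feasible)

/-- Lemma 2 (trace-consistency of the robust linear update) for the measurement model
`z = C x̄ + D ȳ + η` with noise covariance `Se`. -/
theorem robust_linear_update_trace_consistent {n m p : ℕ}
    (C : Matrix (Fin p) (Fin n) ℝ) (D : Matrix (Fin p) (Fin m) ℝ)
    (Se : Matrix (Fin p) (Fin p) ℝ) (hSe : Se.PosSemidef)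
    (Sxx Stxx : Matrix (Fin n) (Fin n) ℝ)
    (Syy Styy : Matrix (Fin m) (Fin m) ℝ)
    (Stxy : Matrix (Fin n) (Fin m) ℝ)
    (Kstar : Matrix (Fin n) (Fin p) ℝ) (Sxystar : Matrix (Fin n) (Fin m) ℝ)
    (h_joint : (fromBlocks Stxx Stxy Stxyᵀ Styy).PosSemidef)
    (hx : (Sxx - Stxx).PosSemidef)
    (hy : (Syy - Styy).PosSemidef)
    (h_feas : (fromBlocks Sxx Sxystar Sxystarᵀ Syy).PosSemidef)
    (h_max : ∀ Q : Matrix (Fin n) (Fin m) ℝ,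
      (fromBlocks Sxx Q Qᵀ Syy).PosSemidef →
      ((1 - Kstar * C) * Sxx * (1 - Kstar * C)ᵀ - (1 - Kstar * C) * Q * Dᵀ * Kstarᵀ
        - Kstar * D * Qᵀ * (1 - Kstar * C)ᵀ + Kstar * D * Syy * Dᵀ * Kstarᵀ
        + Kstar * Se * Kstarᵀ).trace ≤
      ((1 - Kstar * C) * Sxx * (1 - Kstar * C)ᵀ - (1 - Kstar * C) * Sxystar * Dᵀ * Kstarᵀ
        - Kstar * D * Sxystarᵀ * (1 - Kstar * C)ᵀ + Kstar * D * Syy * Dᵀ * Kstarᵀ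
        + Kstar * Se * Kstarᵀ).trace) :
    ((1 - Kstar * C) * Stxx * (1 - Kstar * C)ᵀ - (1 - Kstar * C) * Stxy * Dᵀ * Kstarᵀ
      - Kstar * D * Stxyᵀ * (1 - Kstar * C)ᵀ + Kstar * D * Styy * Dᵀ * Kstarᵀ
      + Kstar * Se * Kstarᵀ).trace ≤
    ((1 - Kstar * C) * Sxx * (1 - Kstar * C)ᵀ - (1 - Kstar * C) * Sxystar * Dᵀ * Kstarᵀ
      - Kstar * D * Sxystarᵀ * (1 - Kstar * C)ᵀ + Kstar * D * Syy * Dᵀ * Kstarᵀ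
      + Kstar * Se * Kstarᵀ).trace :=
  robust_linear_update_trace_consistent_general C D Se Sxx Stxx Syy Styy Stxy Kstar Sxystar h_joint
    hx hy h_max
end

section
/- Let $\Sigma_{xx}$ and $\Sigma_{yy}$ be real positive definite $n\times n$ matrices, let $\omega \in [0,1]$, and set $\Sigma_{zz} = \big(\omega \Sigma_{xx}^{-1} + (1-\omega)\Sigma_{yy}^{-1}\big)^{-1}$, $W_x = \omega\,\Sigma_{zz}\Sigma_{xx}^{-1}$ and $W_y = (1-\omega)\,\Sigma_{zz}\Sigma_{yy}^{-1}$. Then for every choice of real $n\times n$ matrices $\widetilde{\Sigma}_{xx}, \widetilde{\Sigma}_{yy}, \widetilde{\Sigma}_{xy}$ such that $\begin{bmatrix}\widetilde{\Sigma}_{xx} & \widetilde{\Sigma}_{xy}\\ \widetilde{\Sigma}_{xy}^T & \widetilde{\Sigma}_{yy}\end{bmatrix} \succeq 0$, $\widetilde{\Sigma}_{xx} \preceq \Sigma_{xx}$ and $\widetilde{\Sigma}_{yy} \preceq \Sigma_{yy}$, one has $\Sigma_{zz} \succeq W_x \widetilde{\Sigma}_{xx} W_x^T + W_x \widetilde{\Sigma}_{xy}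 W_y^T + W_y \widetilde{\Sigma}_{xy}^T W_x^T + W_y \widetilde{\Sigma}_{yy} W_y^T$. -/
/-!
Put `X = Szz Sxx⁻¹` and `Y = Szz Syy⁻¹`, so that `Wx = ω X`, `Wy = (1 - ω) Y` and, since
`Szz⁻¹ = ω Sxx⁻¹ + (1 - ω) Syy⁻¹`, also `Szz = ω X Sxx Xᵀ + (1 - ω) Y Syy Yᵀ`. The gap between
`Szz` and the true covariance `[Wx Wy] P [Wx Wy]ᵀ` of the fused error then splits as
`ω X (Sxx - Stxx) Xᵀ + (1 - ω) Y (Syy - Styy) Yᵀ + ω (1 - ω) [X -Y] P [X -Y]ᵀ`,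
a sum of positive semidefinite matrices.
-/

open Matrix

namespace Matrix

theorem PosSemidef.mul_fromBlocks_mul_conjTranspose {m n₁ n₂ R : Type*} [Fintype m]
    [Fintype n₁] [Fintype n₂] [CommRing R] [PartialOrder R] [StarRing R]
    {A : Matrix n₁ n₁ R} {B : Matrix n₁ n₂ R} {D : Matrix n₂ n₂ R}
    (hP : (fromBlocks A B Bᴴ D).PosSemidef) (X : Matrix m n₁ R) (Y : Matrix m n₂ R) :
    (X * A * Xᴴ + X * B * Yᴴ + Y * Bᴴ * Xᴴ + Y * D * Yᴴ).PosSemidef := by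
  have h := hP.mul_mul_conjTranspose_same (fromCols X Y)
  rw [conjTranspose_fromCols_eq_fromRows_conjTranspose, fromCols_mul_fromBlocks,
    fromCols_mul_fromRows, Matrix.add_mul, Matrix.add_mul] at h
  convert h using 1
  abel

theorem PosDef.smul_add_one_sub_smul {n : Type*} [Fintype n] {A B : Matrix n n ℝ}
    (hA : A.PosDef) (hB : B.PosDef) {ω : ℝ} (hω0 : 0 ≤ ω) (hω1 : ω ≤ 1) :
    (ω • A + (1 - ω) • B).PosDef := by
  rcases hω0.eq_or_lt with rfl | hω
  · simpa using hB
  · exact (hA.smul hω).add_posSemidef (hB.posSemidef.smul (sub_nonneg.2 hω1))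

theorem eq_smul_add_smul_of_eq_inv {n R : Type*} [Fintype n] [DecidableEq n] [CommRing R]
    {S S' Z : Matrix n n R} (hS : S.IsSymm) (hS' : S'.IsSymm)
    (hSu : IsUnit S.det) (hS'u : IsUnit S'.det) {a b : R}
    (hT : IsUnit (a • S⁻¹ + b • S'⁻¹).det) (hZ : Z = (a • S⁻¹ + b • S'⁻¹)⁻¹) :
    Z = a • (Z * S⁻¹ * S * (Z * S⁻¹)ᵀ) + b • (Z * S'⁻¹ * S' * (Z * S'⁻¹)ᵀ) := by
  have hZsymm : Zᵀ = Z := by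
    rw [hZ]
    exact ((hS.inv.smul a).add (hS'.inv.smul b)).inv
  have hTZ : (a • S⁻¹ + b • S'⁻¹) * Z = 1 := by
    rw [hZ]
    exact mul_nonsing_inv _ hT
  rw [nonsing_inv_mul_cancel_right S Z hSu, nonsing_inv_mul_cancel_right S' Z hS'u,
    transpose_mul, transpose_mul, hS.inv.eq, hS'.inv.eq, hZsymm]
  calc Z = Z * ((a • S⁻¹ + b • S'⁻¹) * Z) := by rw [hTZ, Matrix.mul_one]
    _ = _ := by simp only [Matrix.add_mul, Matrix.mul_add, Matrix.smul_mul, Matrix.mul_smul]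

theorem PosSemidef.covarianceIntersection {m n₁ n₂ : Type*} [Fintype m] [Fintype n₁]
    [Fintype n₂] {S A : Matrix n₁ n₁ ℝ} {S' D : Matrix n₂ n₂ ℝ} {B : Matrix n₁ n₂ ℝ}
    (hP : (fromBlocks A B Bᵀ D).PosSemidef) (hA : (S - A).PosSemidef)
    (hD : (S' - D).PosSemidef) {ω : ℝ} (hω0 : 0 ≤ ω) (hω1 : ω ≤ 1)
    (X : Matrix m n₁ ℝ) (Y : Matrix m n₂ ℝ) :
    (ω • (X * S * Xᵀ) + (1 - ω) • (Y * S' * Yᵀ) -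
      ((ω • X) * A * (ω • X)ᵀ + (ω • X) * B * ((1 - ω) • Y)ᵀ
        + ((1 - ω) • Y) * Bᵀ * (ω • X)ᵀ + ((1 - ω) • Y) * D * ((1 - ω) • Y)ᵀ)).PosSemidef := by
  have hcross := hP.mul_fromBlocks_mul_conjTranspose X (-Y)
  have hSA := hA.mul_mul_conjTranspose_same X
  have hSD := hD.mul_mul_conjTranspose_same Y
  simp only [conjTranspose_eq_transpose_of_trivial] at hcross hSA hSD
  have hgap : ω • (X * S * Xᵀ) + (1 - ω) • (Y * S' * Yᵀ) -
      ((ω • X) * A * (ω • X)ᵀ + (ω • X) * B * ((1 - ω) • Y)ᵀ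
        + ((1 - ω) • Y) * Bᵀ * (ω • X)ᵀ + ((1 - ω) • Y) * D * ((1 - ω) • Y)ᵀ) =
      ω • (X * (S - A) * Xᵀ) + (1 - ω) • (Y * (S' - D) * Yᵀ) +
        (ω * (1 - ω)) • (X * A * Xᵀ + X * B * (-Y)ᵀ + -Y * Bᵀ * Xᵀ + -Y * D * (-Y)ᵀ) := by
    simp only [transpose_smul, transpose_neg, Matrix.smul_mul, Matrix.mul_smul, Matrix.mul_neg,
      Matrix.neg_mul, Matrix.mul_sub, Matrix.sub_mul, smul_smul]
    module
  rw [hgap]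
  exact ((hSA.smul hω0).add (hSD.smul (sub_nonneg.2 hω1))).add
    (hcross.smul (mul_nonneg hω0 (sub_nonneg.2 hω1)))

end Matrix

/-- Consistency of Covariance Intersection: with `Szz⁻¹ = ω Sxx⁻¹ + (1-ω) Syy⁻¹`,
`Wx = ω Szz Sxx⁻¹`, `Wy = (1-ω) Szz Syy⁻¹`, the reported covariance `Szz` upper-bounds
the true fused error covariance for every admissible cross-covariance. -/
theorem covariance_intersection_consistent {n : ℕ}
    (Sxx Syy : Matrix (Fin n) (Fin n) ℝ)
    (hSxx : Sxx.PosDef) (hSyy : Syy.PosDef)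
    (ω : ℝ) (hω0 : 0 ≤ ω) (hω1 : ω ≤ 1)
    (Szz Wx Wy : Matrix (Fin n) (Fin n) ℝ)
    (hSzz : Szz = (ω • Sxx⁻¹ + (1 - ω) • Syy⁻¹)⁻¹)
    (hWx : Wx = ω • (Szz * Sxx⁻¹))
    (hWy : Wy = (1 - ω) • (Szz * Syy⁻¹)) :
    ∀ Stxx Styy Stxy : Matrix (Fin n) (Fin n) ℝ,
      (fromBlocks Stxx Stxy Stxyᵀ Styy).PosSemidef →
      (Sxx - Stxx).PosSemidef →
      (Syy - Styy).PosSemidef →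
      (Szz - (Wx * Stxx * Wxᵀ + Wx * Stxy * Wyᵀ + Wy * Stxyᵀ * Wxᵀ
        + Wy * Styy * Wyᵀ)).PosSemidef := by
  intro Stxx Styy Stxy hP hX hY
  have hT := hSxx.inv.smul_add_one_sub_smul hSyy.inv hω0 hω1
  have hSzz_eq := eq_smul_add_smul_of_eq_inv (isHermitian_iff_isSymm.1 hSxx.isHermitian)
    (isHermitian_iff_isSymm.1 hSyy.isHermitian)
    hSxx.det_pos.ne'.isUnit hSyy.det_pos.ne'.isUnit hT.det_pos.ne'.isUnit hSzz
  have hgap := hP.covarianceIntersection hX hY hω0 hω1 (Szz * Sxx⁻¹) (Szz * Syy⁻¹)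
  rwa [← hSzz_eq, ← hWx, ← hWy] at hgap
end
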